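/- Assume the elliptic hypergeometric setting and assume hypothesis (A) or hypothesis (B). Then there is no complex constant v such that (v² − v)·A(z) + v·ν = (v − 1)·A(1/z) for all z outside some discrete subset of ℂ∖{0}. Equivalently, the Riccati equation v²·A(z) + v·(ν − A(z) − A(1/z)) + A(1/z) = 0 has no constant solution v ∈ ℂ. -/

import Mathlib

/-- The infinite `p`-Pochhammer product `(z;p)_∞ = ∏_{j ≥ 0} (1 - z pʲ)`. -/
noncomputable def poch (p z : ℂ) : ℂ := ∏' j : ℕ, (1 - z * p ^ j)

/-- The theta function `θ(z;p) = (z;p)_∞ (p z⁻¹;p)_∞`. -/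
noncomputable def theta (p z : ℂ) : ℂ := poch p z * poch p (p * z⁻¹)

/-- `S` is a discrete subset of `ℂ ∖ {0}`: it avoids `0` and each of its points is
isolated in `S`. -/
def DiscreteIn (S : Set ℂ) : Prop :=
  S ⊆ {z : ℂ | z ≠ 0} ∧ ∀ z ∈ S, ∃ ε > 0, ∀ w ∈ S, w ≠ z → ε ≤ dist w z

/-- The coefficient `A(z) = (∏_{j=1}^8 θ(εⱼ z;p)) / (θ(z²;p) θ(q z²;p))` of the
elliptic hypergeometric equation. -/
noncomputable def Afun (p q : ℂ) (ε : Fin 8 → ℂ) (z : ℂ) : ℂ :=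
  (∏ j, theta p (ε j * z)) / (theta p (z ^ 2) * theta p (q * z ^ 2))

/-- The constant `ν = ∏_{j=1}^6 θ(εⱼ ε₈ / q;p)`. -/
noncomputable def nuConst (p q : ℂ) (ε : Fin 8 → ℂ) : ℂ :=
  ∏ j : Fin 6, theta p (ε (Fin.castLE (by norm_num) j) * ε 7 / q)

/-- Hypothesis (A): every multiplicative relation among `ε₁, …, ε₈, p, q` is induced
by the balancing condition `∏ εⱼ = p² q²`. -/
def HypA (p q : ℂ) (ε : Fin 8 → ℂ) : Prop :=
  ∀ (α : Fin 8 → ℤ) (m n : ℤ), (∏ j, ε j ^ α j) = p ^ m * q ^ n →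
    ∃ a : ℤ, (∀ j, α j = a) ∧ m = 2 * a ∧ n = 2 * a

/-- Hypothesis (B): `ε₈ = q ε₇` and every multiplicative relation among
`ε₁, …, ε₈, p, q` is induced by the special balancing condition. -/
def HypB (p q : ℂ) (ε : Fin 8 → ℂ) : Prop :=
  ε 7 = q * ε 6 ∧
  ∀ (α : Fin 8 → ℤ) (m n : ℤ), (∏ j, ε j ^ α j) = p ^ m * q ^ n →
    ∃ a : ℤ, (∀ j : Fin 8, (j : ℕ) < 6 → α j = a) ∧ a = n - α 7 ∧
      α 6 + α 7 = 2 * a ∧ m = 2 * a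

/-- The derivation `(D g)(w) = w g'(w)`. -/
noncomputable def Dop (g : ℂ → ℂ) : ℂ → ℂ := fun w => w * deriv g w

/-!
Multiply the equation by the denominators `θ(z²;p) θ(q z²;p)` of `A(z)` and of `A(1/z)`. The
result is an identity between functions continuous on `ℂ ∖ {0}` that holds off a countable set,
hence at every `z ≠ 0`. At a square root `r` of `q` the denominator of `A(1/r)` contains the
factor `θ(1;p) = 0`, and the identity collapses to `(v - 1) · (numerator of A(1/r)) ·
(denominator of A(r)) = 0`; hypotheses (A)/(B) and `p^ℤ ∩ q^ℤ = {1}` keep the last two factors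
away from the zeros `p^ℤ` of `θ`, so `v = 1`. For `v = 1` the identity at `z = q` reads
`ν · (denominator of A(q)) · (denominator of A(1/q)) = 0`, while `ν ≠ 0` by (A)/(B) again.
-/

open Filter Topology

lemma Set.Countable.preimage_pow {R : Type*} [CommRing R] [IsDomain R] {C : Set R}
    (hC : C.Countable) {n : ℕ} (hn : n ≠ 0) : ((· ^ n) ⁻¹' C).Countable := by
  refine (hC.biUnion fun c _ => (Polynomial.nthRootsFinset n c).countable_toSet).mono
    fun z hz => Set.mem_biUnion (x := z ^ n) hz ?_
  simp [Polynomial.mem_nthRootsFinset (Nat.pos_of_ne_zero hn)]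

lemma DiscreteIn.countable {S : Set ℂ} (hS : DiscreteIn S) : S.Countable := by
  refine (HereditarilyLindelofSpace.isLindelof S).countable_of_isDiscrete
    (isDiscrete_iff_forall_mem_exists_isOpen.2 fun z hz => ?_)
  obtain ⟨r, hr, hsep⟩ := hS.2 z hz
  refine ⟨Metric.ball z r, Metric.isOpen_ball, Set.eq_singleton_iff_unique_mem.2
    ⟨⟨Metric.mem_ball_self hr, hz⟩, fun w ⟨hwz, hwS⟩ => ?_⟩⟩
  by_contra hne
  exact (hsep w hwS hne).not_gt hwz

lemma eq_of_continuousAt_of_eqOn_compl_countable {Y : Type*} [TopologicalSpace Y] [T2Space Y]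
    {f g : ℂ → Y} {C : Set ℂ} (hC : C.Countable) (hfg : Set.EqOn f g Cᶜ) {z : ℂ}
    (hf : ContinuousAt f z) (hg : ContinuousAt g z) : f z = g z := by
  have : (𝓝[Cᶜ] z).NeBot := mem_closure_iff_nhdsWithin_neBot.1 (hC.dense_compl ℂ z)
  exact tendsto_nhds_unique_of_eventuallyEq (hf.mono_left nhdsWithin_le_nhds)
    (hg.mono_left nhdsWithin_le_nhds) (eventually_nhdsWithin_of_forall hfg)

section Theta

variable {p : ℂ}

lemma hasProdUniformlyOn_poch (hp : ‖p‖ < 1) (R : ℝ) :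
    HasProdUniformlyOn (fun j z => 1 - z * p ^ j) (poch p) (Metric.closedBall 0 R) := by
  simp_rw [sub_eq_add_neg]
  have hu := (summable_geometric_of_lt_one (norm_nonneg p) hp).mul_left R
  refine hu.hasProdUniformlyOn_nat_one_add (isCompact_closedBall 0 R)
    (.of_forall fun j z hz => ?_) fun j => by fun_prop
  rw [norm_neg, norm_mul, norm_pow]
  exact mul_le_mul_of_nonneg_right (by simpa using hz) (by positivity)

lemma continuous_poch (hp : ‖p‖ < 1) : Continuous (poch p) := by
  refine continuous_iff_continuousAt.2 fun z => ?_
  have hcont : ContinuousOn (poch p) (Metric.closedBall 0 (‖z‖ + 1)) :=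
    (hasProdUniformlyOn_poch hp _).tendstoUniformlyOn_finsetRange.continuousOn
      (.of_forall fun N => by fun_prop)
  exact hcont.continuousAt (Metric.closedBall_mem_nhds_of_mem (by simp))

lemma poch_ne_zero (hp : ‖p‖ < 1) {z : ℂ} (hz : ∀ j : ℕ, z * p ^ j ≠ 1) : poch p z ≠ 0 := by
  refine tprod_one_add_ne_zero_of_summable (f := fun j => -(z * p ^ j))
    (fun j => by simpa [← sub_eq_add_neg, sub_eq_zero] using (hz j).symm) ?_
  simpa [norm_mul, norm_pow] using (summable_geometric_of_lt_one (norm_nonneg p) hp).mul_left ‖z‖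

lemma theta_one : theta p 1 = 0 := by
  rw [theta, poch, tprod_of_exists_eq_zero ⟨0, by simp⟩, zero_mul]

lemma theta_ne_zero (hp : ‖p‖ < 1) (hp0 : p ≠ 0) {x : ℂ} (hx : ∀ k : ℤ, p ^ k ≠ x) :
    theta p x ≠ 0 := by
  refine mul_ne_zero (poch_ne_zero hp fun j h => hx (-j) ?_)
    (poch_ne_zero hp fun j h => hx (j + 1) ?_)
  · rw [zpow_neg, zpow_natCast, eq_comm]
    exact eq_inv_of_mul_eq_one_left h
  · have hx0 : x ≠ 0 := by rintro rfl; simp at h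
    rw [← mul_inv_eq_one₀ hx0, ← h, zpow_add_one₀ hp0, zpow_natCast]
    ring

lemma continuousAt_theta (hp : ‖p‖ < 1) {x : ℂ} (hx : x ≠ 0) : ContinuousAt (theta p) x :=
  (continuous_poch hp).continuousAt.mul
    ((continuous_poch hp).continuousAt.comp (continuousAt_const.mul (continuousAt_inv₀ hx)))

lemma countable_setOf_theta_eq_zero (hp : ‖p‖ < 1) (hp0 : p ≠ 0) :
    {x | theta p x = 0}.Countable :=
  (Set.countable_range (p ^ · : ℤ → ℂ)).mono fun _ hx => not_forall_not.1 fun h =>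
    theta_ne_zero hp hp0 h hx

end Theta

section Relations

variable {p q : ℂ} {ε : Fin 8 → ℂ}

-- Under (A) no such relation exists at all: its `q`-exponent `1` is odd.
lemma exponents_of_prod_zpow_eq_zpow_mul (hAB : HypA p q ε ∨ HypB p q ε) {α : Fin 8 → ℤ}
    {k : ℤ} (h : ∏ j, ε j ^ α j = p ^ k * q) : α 0 + α 7 = 1 ∧ α 6 + α 7 = 2 * α 0 := by
  rw [← zpow_one q] at h
  rcases hAB with hA | ⟨-, hB⟩
  · obtain ⟨a, -, -, ha⟩ := hA α k 1 h
    omega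
  · obtain ⟨a, hlt, ha, hsum, -⟩ := hB α k 1 h
    have := hlt 0 (by decide)
    omega

lemma sq_ne_zpow_mul (hAB : HypA p q ε ∨ HypB p q ε) (j : Fin 8) (k : ℤ) :
    ε j ^ 2 ≠ p ^ k * q := by
  intro h
  have hprod : ∏ i, ε i ^ (Pi.single j 2 : Fin 8 → ℤ) i = p ^ k * q := by
    simpa [Pi.single_apply] using h
  have := exponents_of_prod_zpow_eq_zpow_mul hAB hprod
  fin_cases j <;> simp at this

lemma mul_last_ne_zpow_mul (hε : ∀ j, ε j ≠ 0) (hAB : HypA p q ε ∨ HypB p q ε) (j : Fin 6)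
    (k : ℤ) :
    ε (Fin.castLE (by norm_num) j) * ε 7 ≠ p ^ k * q := by
  intro h
  have hprod :
      ∏ i, ε i ^ (Pi.single (Fin.castLE (by norm_num) j) 1 + Pi.single 7 1 : Fin 8 → ℤ) i =
        p ^ k * q := by
    simp only [Pi.add_apply, zpow_add₀ (hε _), Finset.prod_mul_distrib]
    simpa [Pi.single_apply] using h
  have := exponents_of_prod_zpow_eq_zpow_mul hAB hprod
  fin_cases j <;> simp at this

end Relations

noncomputable def Anum (p : ℂ) (ε : Fin 8 → ℂ) (z : ℂ) : ℂ := ∏ j, theta p (ε j * z)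

noncomputable def Aden (p q : ℂ) (z : ℂ) : ℂ := theta p (z ^ 2) * theta p (q * z ^ 2)

section Coefficient

variable {p q : ℂ} {ε : Fin 8 → ℂ}

lemma Afun_eq_div (z : ℂ) : Afun p q ε z = Anum p ε z / Aden p q z := rfl

lemma continuousAt_Anum (hp : ‖p‖ < 1) (hε : ∀ j, ε j ≠ 0) {z : ℂ} (hz : z ≠ 0) :
    ContinuousAt (Anum p ε) z :=
  tendsto_finsetProd _ fun j _ =>
    (continuousAt_theta hp (mul_ne_zero (hε j) hz)).comp (continuousAt_const.mul continuousAt_id)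

lemma continuousAt_Aden (hp : ‖p‖ < 1) (hq0 : q ≠ 0) {z : ℂ} (hz : z ≠ 0) :
    ContinuousAt (Aden p q) z := by
  have hsq : ContinuousAt (theta p) (z ^ 2) := continuousAt_theta hp (pow_ne_zero 2 hz)
  have hqsq : ContinuousAt (theta p) (q * z ^ 2) :=
    continuousAt_theta hp (mul_ne_zero hq0 (pow_ne_zero 2 hz))
  exact (hsq.comp (f := (· ^ 2)) (by fun_prop)).mul (hqsq.comp (f := (q * · ^ 2)) (by fun_prop))

lemma countable_setOf_Aden_eq_zero (hp : ‖p‖ < 1) (hp0 : p ≠ 0) (hq0 : q ≠ 0) :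
    {z | Aden p q z = 0}.Countable := by
  have hZ := countable_setOf_theta_eq_zero hp hp0
  refine ((hZ.union (hZ.preimage (mul_right_injective₀ hq0))).preimage_pow two_ne_zero).mono
    fun z hz => ?_
  simpa [Aden] using hz

lemma Aden_ne_zero_of_sq_eq_zpow (hp : ‖p‖ < 1) (hp0 : p ≠ 0) (hq0 : q ≠ 0)
    (hpq : ∀ m n : ℤ, p ^ m = q ^ n → m = 0 ∧ n = 0) {n : ℤ} (hn : n ≠ 0) (hn1 : n + 1 ≠ 0)
    {z : ℂ} (hz : z ^ 2 = q ^ n) : Aden p q z ≠ 0 := by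
  rw [Aden, hz, ← zpow_one_add₀ hq0, add_comm]
  exact mul_ne_zero (theta_ne_zero hp hp0 fun k h => hn (hpq k n h).2)
    (theta_ne_zero hp hp0 fun k h => hn1 (hpq k _ h).2)

lemma Aden_inv_eq_zero_of_sq_eq (hq0 : q ≠ 0) {r : ℂ} (hr : r ^ 2 = q) : Aden p q r⁻¹ = 0 := by
  rw [Aden, inv_pow, hr, mul_inv_cancel₀ hq0, theta_one, mul_zero]

lemma Anum_inv_ne_zero_of_sq_eq (hp : ‖p‖ < 1) (hp0 : p ≠ 0) (hAB : HypA p q ε ∨ HypB p q ε)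
    {r : ℂ} (hr0 : r ≠ 0) (hr : r ^ 2 = q) : Anum p ε r⁻¹ ≠ 0 :=
  Finset.prod_ne_zero_iff.2 fun j _ => theta_ne_zero hp hp0 fun k h =>
    sq_ne_zpow_mul hAB j (2 * k) (by
      rw [← hr, zpow_mul', zpow_two, h]
      field_simp)

lemma nuConst_ne_zero (hp : ‖p‖ < 1) (hp0 : p ≠ 0) (hq0 : q ≠ 0) (hε : ∀ j, ε j ≠ 0)
    (hAB : HypA p q ε ∨ HypB p q ε) : nuConst p q ε ≠ 0 :=
  Finset.prod_ne_zero_iff.2 fun j _ => theta_ne_zero hp hp0 fun k h =>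
    mul_last_ne_zpow_mul hε hAB j k (by rw [h]; field_simp)

lemma riccati_mul_denominators (hp : ‖p‖ < 1) (hp0 : p ≠ 0) (hq0 : q ≠ 0) (hε : ∀ j, ε j ≠ 0)
    {v ν : ℂ} {S : Set ℂ} (hS : DiscreteIn S)
    (h : ∀ z : ℂ, z ≠ 0 → z ∉ S → (v ^ 2 - v) * Afun p q ε z + v * ν = (v - 1) * Afun p q ε z⁻¹)
    {z : ℂ} (hz : z ≠ 0) :
    (v ^ 2 - v) * Anum p ε z * Aden p q z⁻¹ + v * ν * Aden p q z * Aden p q z⁻¹ =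
      (v - 1) * Anum p ε z⁻¹ * Aden p q z := by
  have hZ := countable_setOf_Aden_eq_zero hp hp0 hq0
  have hC : (S ∪ {0} ∪ {z | Aden p q z = 0} ∪ (·⁻¹) ⁻¹' {z | Aden p q z = 0}).Countable :=
    ((hS.countable.union (Set.countable_singleton 0)).union hZ).union (hZ.preimage inv_injective)
  have hAnum (w : ℂ) (hw : w ≠ 0) : ContinuousAt (fun z => Anum p ε z⁻¹) w :=
    (continuousAt_Anum hp hε (inv_ne_zero hw)).comp (continuousAt_inv₀ hw)
  have hAden (w : ℂ) (hw : w ≠ 0) : ContinuousAt (fun z => Aden p q z⁻¹) w :=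
    (continuousAt_Aden hp hq0 (inv_ne_zero hw)).comp (continuousAt_inv₀ hw)
  refine eq_of_continuousAt_of_eqOn_compl_countable hC
    (f := fun z => (v ^ 2 - v) * Anum p ε z * Aden p q z⁻¹ + v * ν * Aden p q z * Aden p q z⁻¹)
    (g := fun z => (v - 1) * Anum p ε z⁻¹ * Aden p q z) (fun w hw => ?_) ?_ ?_
  · simp only [Set.compl_union, Set.mem_inter_iff, Set.mem_compl_iff, Set.mem_singleton_iff,
      Set.mem_ofPred_eq, Set.mem_preimage] at hw
    obtain ⟨⟨⟨hwS, hw0⟩, hwD⟩, hwD'⟩ := hw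
    have hAw : Afun p q ε w * Aden p q w = Anum p ε w := div_mul_cancel₀ _ hwD
    have hAw' : Afun p q ε w⁻¹ * Aden p q w⁻¹ = Anum p ε w⁻¹ := div_mul_cancel₀ _ hwD'
    linear_combination Aden p q w * Aden p q w⁻¹ * h w hw0 hwS
      - (v ^ 2 - v) * Aden p q w⁻¹ * hAw + (v - 1) * Aden p q w * hAw'
  · exact (((continuousAt_Anum hp hε hz).const_mul _).mul (hAden z hz)).add
      (((continuousAt_Aden hp hq0 hz).const_mul _).mul (hAden z hz))
  · exact ((hAnum z hz).const_mul _).mul (continuousAt_Aden hp hq0 hz)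

end Coefficient

theorem elliptic_hypergeometric_no_constant_riccati_solution_general
    (p q : ℂ) (ε : Fin 8 → ℂ)
    (hp0 : p ≠ 0) (hp1 : ‖p‖ < 1)
    (hq0 : q ≠ 0)
    (hpq : ∀ m n : ℤ, p ^ m = q ^ n → m = 0 ∧ n = 0)
    (hε : ∀ j, ε j ≠ 0)
    (hAB : HypA p q ε ∨ HypB p q ε) :
    (¬ ∃ v : ℂ, ∃ S : Set ℂ, DiscreteIn S ∧ ∀ z : ℂ, z ≠ 0 → z ∉ S →
      (v ^ 2 - v) * Afun p q ε z + v * nuConst p q ε = (v - 1) * Afun p q ε z⁻¹) ∧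
    (¬ ∃ v : ℂ, ∃ S : Set ℂ, DiscreteIn S ∧ ∀ z : ℂ, z ≠ 0 → z ∉ S →
      v ^ 2 * Afun p q ε z + v * (nuConst p q ε - Afun p q ε z - Afun p q ε z⁻¹)
        + Afun p q ε z⁻¹ = 0) := by
  have key : ¬ ∃ v : ℂ, ∃ S : Set ℂ, DiscreteIn S ∧ ∀ z : ℂ, z ≠ 0 → z ∉ S →
      (v ^ 2 - v) * Afun p q ε z + v * nuConst p q ε = (v - 1) * Afun p q ε z⁻¹ := by
    rintro ⟨v, S, hS, h⟩
    have hF {z : ℂ} (hz : z ≠ 0) := riccati_mul_denominators hp1 hp0 hq0 hε hS h hz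
    have hAden {z : ℂ} {n : ℤ} (hn : n ≠ 0) (hn1 : n + 1 ≠ 0) (hz : z ^ 2 = q ^ n) :=
      Aden_ne_zero_of_sq_eq_zpow hp1 hp0 hq0 hpq hn hn1 hz
    obtain ⟨r, hr⟩ : ∃ r : ℂ, r ^ 2 = q := IsAlgClosed.exists_pow_nat_eq q two_pos
    have hr0 : r ≠ 0 := by rintro rfl; exact hq0 (by simp [← hr])
    have hv : v = 1 := by
      have hFr := hF hr0
      rw [Aden_inv_eq_zero_of_sq_eq hq0 hr] at hFr
      have hAr := hAden one_ne_zero (by norm_num) (by rw [hr, zpow_one])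
      have hNr := Anum_inv_ne_zero_of_sq_eq hp1 hp0 hAB hr0 hr
      simpa [hAr, hNr, sub_eq_zero] using hFr.symm
    subst hv
    have hAq := hAden (z := q) (n := 2) (by norm_num) (by norm_num) (by norm_cast)
    have hAq' := hAden (z := q⁻¹) (n := -2) (by norm_num) (by norm_num) (by simp)
    exact nuConst_ne_zero hp1 hp0 hq0 hε hAB (by simpa [hAq, hAq'] using hF hq0)
  exact ⟨key, fun ⟨v, S, hS, h⟩ =>
    key ⟨v, S, hS, fun z hz hzS => by linear_combination h z hz hzS⟩⟩

/-- Under hypothesis (A) or (B), the equation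
`(v² - v) A(z) + v ν = (v - 1) A(1/z)` has no constant solution `v ∈ ℂ` holding off a
discrete subset of `ℂ ∖ {0}`; equivalently, the Riccati equation
`v² A(z) + v (ν - A(z) - A(1/z)) + A(1/z) = 0` has no constant solution. -/
theorem elliptic_hypergeometric_no_constant_riccati_solution
    (p q : ℂ) (ε : Fin 8 → ℂ)
    (hp0 : p ≠ 0) (hp1 : ‖p‖ < 1)
    (hq0 : q ≠ 0) (hq1 : ‖q‖ < 1)
    (hpq : ∀ m n : ℤ, p ^ m = q ^ n → m = 0 ∧ n = 0)
    (hε : ∀ j, ε j ≠ 0)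
    (hbal : (∏ j, ε j) = p ^ 2 * q ^ 2)
    (hAB : HypA p q ε ∨ HypB p q ε) :
    (¬ ∃ v : ℂ, ∃ S : Set ℂ, DiscreteIn S ∧ ∀ z : ℂ, z ≠ 0 → z ∉ S →
      (v ^ 2 - v) * Afun p q ε z + v * nuConst p q ε = (v - 1) * Afun p q ε z⁻¹) ∧
    (¬ ∃ v : ℂ, ∃ S : Set ℂ, DiscreteIn S ∧ ∀ z : ℂ, z ≠ 0 → z ∉ S →
      v ^ 2 * Afun p q ε z + v * (nuConst p q ε - Afun p q ε z - Afun p q ε z⁻¹)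
        + Afun p q ε z⁻¹ = 0) :=
  elliptic_hypergeometric_no_constant_riccati_solution_general p q ε hp0 hp1 hq0 hpq hε hAB
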